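/- arXiv:0803.3522 — 3 statements merged into one kernel-verified Lean document; each statement's English description precedes it below -/
import Mathlib

section
/- Let (D_n)_{n∈ℕ} be a sequence of partitions 0 < t_1^n < ⋯ < t_{N_n}^n = 1 of (0,1] satisfying condition (M): the mesh sup_i (t_{i+1}^n − t_i^n) tends to 0 as n → ∞, and M := sup_n sup_i (t_{i+1}^n / t_i^n) < ∞. Fix 0 ≤ a < b ≤ 1 and t ∈ (0,1]. Then lim_{n→∞} ∫₀^t ( ∑_{t_i ∈ D_n, t_i ≤ t} 1_{(a,b]}(t_i) · t_i^{-1/2} · 1_{(t_i, t_{i+1}]}(s) ) ds = ∫₀^t 1_{(a,b]}(s) s^{-1/2} ds. -/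
/-!
If `s ∈ (t_i, t_{i+1}]`, the step function takes the value `f(t_i)` at `s`, where
`f(x) = 1_{(a,b]}(x) x^{-1/2}`. As the mesh tends to `0`, `t_i` increases to `s`, and `f` is
left-continuous on `(0,1]`, so the integrands converge pointwise. Condition (M) gives
`s ≤ t_{i+1} ≤ M t_i`, hence `t_i^{-1/2} ≤ √M s^{-1/2}`, an integrable bound on `(0,t]`;
dominated convergence concludes.
-/

open Set Filter Topology MeasureTheory

section Partition

variable {α R : Type*} [LinearOrder α] [NonAssocSemiring R] {N : ℕ} {τ : ℕ → α}

theorem sum_mul_indicator_Ioc_of_mem (hτ : MonotoneOn τ (Iic N)) (c : ℕ → R) {i : ℕ}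
    (hi : i < N) {s : α} (hs : s ∈ Ioc (τ i) (τ (i + 1))) :
    ∑ j ∈ Finset.range N, c j * (Ioc (τ j) (τ (j + 1))).indicator 1 s = c i := by
  rw [Finset.sum_eq_single_of_mem i (Finset.mem_range.2 hi), indicator_of_mem hs,
    Pi.one_apply, mul_one]
  intro j hj hji
  rw [Finset.mem_range] at hj
  suffices s ∉ Ioc (τ j) (τ (j + 1)) by rw [indicator_of_notMem this, mul_zero]
  rintro ⟨hjs, hsj⟩
  rcases hji.lt_or_gt with hlt | hgt
  · exact (hsj.trans (hτ (mem_Iic.2 hj) (mem_Iic.2 hi.le) hlt)).not_gt hs.1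
  · exact (hs.2.trans (hτ (mem_Iic.2 hi) (mem_Iic.2 hj.le) hgt)).not_gt hjs

theorem sum_mul_indicator_Ioc_of_notMem (hτ : MonotoneOn τ (Iic N)) (c : ℕ → R) {s : α}
    (hs : s ∉ Ioc (τ 0) (τ N)) :
    ∑ j ∈ Finset.range N, c j * (Ioc (τ j) (τ (j + 1))).indicator 1 s = 0 := by
  refine Finset.sum_eq_zero fun j hj => ?_
  rw [Finset.mem_range] at hj
  suffices s ∉ Ioc (τ j) (τ (j + 1)) by rw [indicator_of_notMem this, mul_zero]
  exact fun hsj => hs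
    ⟨(hτ (mem_Iic.2 (Nat.zero_le _)) (mem_Iic.2 hj.le) (Nat.zero_le _)).trans_lt hsj.1,
      hsj.2.trans (hτ (mem_Iic.2 hj) (mem_Iic.2 le_rfl) hj)⟩

theorem exists_sum_mul_indicator_Ioc_eq (hτ : MonotoneOn τ (Iic N)) (c : ℕ → R) {s : α}
    (hs : s ∈ Ioc (τ 0) (τ N)) :
    ∃ i < N, s ∈ Ioc (τ i) (τ (i + 1)) ∧
      ∑ j ∈ Finset.range N, c j * (Ioc (τ j) (τ (j + 1))).indicator 1 s = c i := by
  obtain ⟨i, hi, hsi⟩ := mem_iUnion₂.1 (Ioc_subset_biUnion_Ioc N τ hs)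
  rw [Finset.mem_range] at hi
  exact ⟨i, hi, hsi, sum_mul_indicator_Ioc_of_mem hτ c hi hsi⟩

end Partition

theorem norm_sum_mul_indicator_Ioc_le {N : ℕ} {τ c : ℕ → ℝ} {M r s : ℝ}
    (hτ : MonotoneOn τ (Iic N)) (hτ0 : 0 < τ 0) (hM : ∀ i < N, τ (i + 1) ≤ M * τ i)
    (hM0 : 0 ≤ M) (hr : r ≤ 0) (hc : ∀ i < N, ‖c i‖ ≤ τ i ^ r) (hs : 0 < s) :
    ‖∑ i ∈ Finset.range N, c i * (Ioc (τ i) (τ (i + 1))).indicator 1 s‖ ≤ M ^ (-r) * s ^ r := by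
  by_cases hsN : s ∈ Ioc (τ 0) (τ N)
  swap
  · rw [sum_mul_indicator_Ioc_of_notMem hτ c hsN, norm_zero]
    positivity
  obtain ⟨i, hi, hsi, hsum⟩ := exists_sum_mul_indicator_Ioc_eq hτ c hsN
  have hτi : 0 < τ i :=
    hτ0.trans_le (hτ (mem_Iic.2 (Nat.zero_le _)) (mem_Iic.2 hi.le) (Nat.zero_le _))
  have hsM : s ≤ M * τ i := hsi.2.trans (hM i hi)
  have hMpos : 0 < M := pos_of_mul_pos_left (hs.trans_le hsM) hτi.le
  calc ‖∑ i ∈ Finset.range N, c i * (Ioc (τ i) (τ (i + 1))).indicator 1 s‖ = ‖c i‖ := by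
        rw [hsum]
    _ ≤ τ i ^ r := hc i hi
    _ ≤ (s / M) ^ r :=
        Real.rpow_le_rpow_of_nonpos (by positivity) ((div_le_iff₀' hMpos).2 hsM) hr
    _ = M ^ (-r) * s ^ r := by
        rw [Real.div_rpow hs.le hMpos.le, Real.rpow_neg hMpos.le, div_eq_inv_mul]

theorem tendsto_of_forall_eventually_mem_image {ι α β : Type*} {u : ι → β} {g : α → β}
    {l : Filter ι} {la : Filter α} {lb : Filter β} (hg : Tendsto g la lb)
    (h : ∀ U ∈ la, ∀ᶠ n in l, u n ∈ g '' U) : Tendsto u l lb := fun V hV => by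
  filter_upwards [h _ (hg hV)] with n ⟨x, hx, hxn⟩
  rwa [← hxn]

theorem tendsto_indicator_Ioc_nhdsLT {α β : Type*} [TopologicalSpace α] [LinearOrder α]
    [ClosedIicTopology α] [TopologicalSpace β] [Zero β] {f : α → β} {a b s : α}
    (hf : Tendsto f (𝓝[<] s) (𝓝 (f s))) :
    Tendsto ((Ioc a b).indicator f) (𝓝[<] s) (𝓝 ((Ioc a b).indicator f s)) := by
  by_cases hs : s ∈ Ioc a b
  · rw [indicator_of_mem hs]
    refine hf.congr' ?_
    filter_upwards [Ioo_mem_nhdsLT hs.1] with x hx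
    exact (indicator_of_mem (show x ∈ Ioc a b from ⟨hx.1, hx.2.le.trans hs.2⟩) f).symm
  · rw [indicator_of_notMem hs]
    refine tendsto_const_nhds.congr' ?_
    rcases not_and_or.1 hs with hsa | hsb
    · filter_upwards [self_mem_nhdsWithin] with x (hx : x < s)
      exact (indicator_of_notMem (fun h => hsa (h.1.trans hx)) f).symm
    · filter_upwards [Ioo_mem_nhdsLT (not_le.1 hsb)] with x hx
      exact (indicator_of_notMem (fun h => (hx.1.trans_le h.2).false) f).symm

theorem tendsto_sum_mul_indicator_Ioc {ι : Type*} {l : Filter ι} {N : ι → ℕ}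
    {τ c : ι → ℕ → ℝ} {g : ℝ → ℝ} {s : ℝ} (hτ : ∀ n, MonotoneOn (τ n) (Iic (N n)))
    (hmesh : ∀ ε > 0, ∀ᶠ n in l, τ n 0 < ε ∧ ∀ i < N n, τ n (i + 1) - τ n i < ε)
    (hs : 0 < s) (hsN : ∀ n, s ≤ τ n (N n)) (hg : Tendsto g (𝓝[<] s) (𝓝 (g s)))
    (hc : ∀ n i, τ n i < s → c n i = g (τ n i)) :
    Tendsto (fun n => ∑ i ∈ Finset.range (N n), c n i * (Ioc (τ n i) (τ n (i + 1))).indicator 1 s)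
      l (𝓝 (g s)) := by
  refine tendsto_of_forall_eventually_mem_image hg fun U hU => ?_
  obtain ⟨x, hxs, hxU⟩ := mem_nhdsLT_iff_exists_Ioo_subset.1 hU
  filter_upwards [hmesh (min s (s - x)) (lt_min hs (sub_pos.2 hxs))] with n ⟨h0, hgap⟩
  obtain ⟨i, hi, hsi, hsum⟩ :=
    exists_sum_mul_indicator_Ioc_eq (hτ n) (c n) ⟨h0.trans_le (min_le_left _ _), hsN n⟩
  have hxi : x < τ n i := by linarith [hgap i hi, min_le_right s (s - x), hsi.2]
  exact ⟨τ n i, hxU ⟨hxi, hsi.1⟩, by rw [hsum, hc n i hsi.1]⟩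

theorem tendsto_setIntegral_sum_mul_indicator_Ioc {N : ℕ → ℕ} {τ : ℕ → ℕ → ℝ} {M r t : ℝ}
    {g : ℝ → ℝ} (hpos : ∀ n, 0 < τ n 0) (hτ : ∀ n, MonotoneOn (τ n) (Iic (N n)))
    (hone : ∀ n, τ n (N n) = 1)
    (hmesh : ∀ ε > 0, ∀ᶠ n in atTop, τ n 0 < ε ∧ ∀ i < N n, τ n (i + 1) - τ n i < ε)
    (hM : ∀ n, ∀ i < N n, τ n (i + 1) ≤ M * τ n i) (hr : -1 < r) (hr0 : r ≤ 0) (ht : t ≤ 1)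
    (hg : ∀ s ∈ Ioc 0 t, Tendsto g (𝓝[<] s) (𝓝 (g s))) (hg_le : ∀ x > 0, ‖g x‖ ≤ x ^ r) :
    Tendsto (fun n => ∫ s in Ioc 0 t, ∑ i ∈ Finset.range (N n),
        (if τ n i ≤ t then g (τ n i) else 0) * (Ioc (τ n i) (τ n (i + 1))).indicator 1 s)
      atTop (𝓝 (∫ s in Ioc 0 t, g s)) := by
  have hM0 : 0 ≤ M := by
    obtain ⟨n, h0, -⟩ := (hmesh 1 one_pos).exists
    have hN : 0 < N n := Nat.pos_of_ne_zero fun h => by rw [← hone n, h] at h0; exact h0.false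
    have := (hτ n (mem_Iic.2 (Nat.zero_le _)) (mem_Iic.2 hN) zero_le_one).trans (hM n 0 hN)
    nlinarith [hpos n]
  refine tendsto_integral_of_dominated_convergence (fun s => M ^ (-r) * s ^ r)
    (fun n => ?_) ((intervalIntegral.intervalIntegrable_rpow' hr).const_mul _).1
    (fun n => ?_) ?_
  · exact (Finset.measurable_sum _ fun i _ =>
      (measurable_one.indicator measurableSet_Ioc).const_mul _).aestronglyMeasurable
  · filter_upwards [ae_restrict_mem measurableSet_Ioc] with s hs
    refine norm_sum_mul_indicator_Ioc_le (hτ n) (hpos n) (hM n) hM0 hr0 (fun i hi => ?_) hs.1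
    have hτi : 0 < τ n i :=
      (hpos n).trans_le (hτ n (mem_Iic.2 (Nat.zero_le _)) (mem_Iic.2 hi.le) (Nat.zero_le _))
    split_ifs
    · exact hg_le _ hτi
    · rw [norm_zero]
      positivity
  · filter_upwards [ae_restrict_mem measurableSet_Ioc] with s hs
    exact tendsto_sum_mul_indicator_Ioc hτ hmesh hs.1 (fun n => (hone n).symm ▸ hs.2.trans ht)
      (hg s hs) fun n i hi => if_pos (hi.le.trans hs.2)

theorem stmt_4_general (N : ℕ → ℕ) (τ : ℕ → ℕ → ℝ)
    (hpos : ∀ n, 0 < τ n 0)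
    (hmono : ∀ n, ∀ i < N n, τ n i < τ n (i + 1))
    (hone : ∀ n, τ n (N n) = 1)
    (hmesh : ∀ ε > (0 : ℝ), ∃ n₀ : ℕ, ∀ n ≥ n₀,
      τ n 0 < ε ∧ ∀ i < N n, τ n (i + 1) - τ n i < ε)
    (M : ℝ) (hM : ∀ n, ∀ i < N n, τ n (i + 1) ≤ M * τ n i)
    (a b : ℝ)
    (t : ℝ) (ht : t ∈ Set.Ioc (0 : ℝ) 1) :
    Tendsto
      (fun n : ℕ => ∫ s in Set.Ioc (0 : ℝ) t,
        ∑ i ∈ Finset.range (N n),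
          if τ n i ≤ t then
            (Set.Ioc a b).indicator 1 (τ n i) * (τ n i) ^ (-(1 : ℝ) / 2) *
              (Set.Ioc (τ n i) (τ n (i + 1))).indicator 1 s
          else 0)
      atTop
      (𝓝 (∫ s in Set.Ioc (0 : ℝ) t, (Set.Ioc a b).indicator 1 s * s ^ (-(1 : ℝ) / 2))) := by
  have hτ : ∀ n, MonotoneOn (τ n) (Iic (N n)) := fun n =>
    (strictMonoOn_Iic_of_lt_succ fun i hi => by simpa using hmono n i hi).monotoneOn
  have hg (s : ℝ) (hs : 0 < s) : Tendsto (fun x => (Ioc a b).indicator 1 x * x ^ (-(1 : ℝ) / 2))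
      (𝓝[<] s) (𝓝 ((Ioc a b).indicator 1 s * s ^ (-(1 : ℝ) / 2))) :=
    (tendsto_indicator_Ioc_nhdsLT tendsto_const_nhds).mul
      ((Real.continuousAt_rpow_const s _ (Or.inl hs.ne')).tendsto.mono_left nhdsWithin_le_nhds)
  have hg_le (x : ℝ) (hx : 0 < x) :
      ‖(Ioc a b).indicator 1 x * x ^ (-(1 : ℝ) / 2)‖ ≤ x ^ (-(1 : ℝ) / 2) := by
    by_cases hmem : x ∈ Ioc a b <;>
      simp [hmem, abs_of_pos (Real.rpow_pos_of_pos hx _), Real.rpow_nonneg hx.le]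
  simpa only [ite_mul, zero_mul] using
    tendsto_setIntegral_sum_mul_indicator_Ioc hpos hτ hone
      (fun ε hε => eventually_atTop.2 (hmesh ε hε)) hM (by norm_num) (by norm_num) ht.2
      (fun s hs => hg s hs.1) hg_le

/-- Let `(D_n)` be a sequence of partitions `0 < t_1^n < ⋯ < t_{N_n}^n = 1` of `(0,1]`
satisfying condition (M): the mesh tends to `0` (including the initial gap `t_1^n`,
since `D_n` partitions `(0,1]`) and the ratios `t_{i+1}^n / t_i^n` are uniformly
bounded.  Fix `0 ≤ a < b ≤ 1` and `t ∈ (0,1]`.  Then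
`∫₀^t ∑_{t_i ∈ D_n, t_i ≤ t} 1_{(a,b]}(t_i) t_i^(-1/2) 1_{(t_i,t_{i+1}]}(s) ds
  → ∫₀^t 1_{(a,b]}(s) s^(-1/2) ds`.
Here `τ n i` is the `(i+1)`-st point of `D_n` (so `τ n 0 = t_1^n` and
`τ n (N n) = t_{N_n}^n = 1`). -/
theorem stmt_4 (N : ℕ → ℕ) (τ : ℕ → ℕ → ℝ)
    (hpos : ∀ n, 0 < τ n 0)
    (hmono : ∀ n, ∀ i < N n, τ n i < τ n (i + 1))
    (hone : ∀ n, τ n (N n) = 1)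
    (hmesh : ∀ ε > (0 : ℝ), ∃ n₀ : ℕ, ∀ n ≥ n₀,
      τ n 0 < ε ∧ ∀ i < N n, τ n (i + 1) - τ n i < ε)
    (M : ℝ) (hM : ∀ n, ∀ i < N n, τ n (i + 1) ≤ M * τ n i)
    (a b : ℝ) (ha : 0 ≤ a) (hab : a < b) (hb : b ≤ 1)
    (t : ℝ) (ht : t ∈ Set.Ioc (0 : ℝ) 1) :
    Tendsto
      (fun n : ℕ => ∫ s in Set.Ioc (0 : ℝ) t,
        ∑ i ∈ Finset.range (N n),
          if τ n i ≤ t then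
            (Set.Ioc a b).indicator 1 (τ n i) * (τ n i) ^ (-(1 : ℝ) / 2) *
              (Set.Ioc (τ n i) (τ n (i + 1))).indicator 1 s
          else 0)
      atTop
      (𝓝 (∫ s in Set.Ioc (0 : ℝ) t, (Set.Ioc a b).indicator 1 s * s ^ (-(1 : ℝ) / 2))) :=
  stmt_4_general N τ hpos hmono hone hmesh M hM a b t ht
end

section
/- Let (D_n)_{n∈ℕ} be a sequence of partitions 0 < t_1^n < ⋯ < t_{N_n}^n = 1 of (0,1] satisfying condition (M): the mesh sup_i (t_{i+1}^n − t_i^n) tends to 0 as n → ∞, and M := sup_n sup_i (t_{i+1}^n / t_i^n) < ∞. Let f_Δ be an elementary function and let t ∈ (0,1]. Then liminf_{n→∞} ∑_{t_i ∈ D_n, t_i ≤ t} (t_{i+1} − t_i) · t_i^{-1/2} · ∫_ℝ f_Δ(x, t_i)² dx ≤ ∫₀^t ∫_ℝ f_Δ(x,s)² s^{-1/2} dx ds. -/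
/-!
Write `φ s = ∫ f_Δ(x, s)² dx`. The Riemann sum is the integral of the step function equal to
`t_i^{-1/2} φ(t_i)` on `(t_i, t_{i+1}]` (for `t_i ≤ t`). Because the `x`-intervals of `f_Δ` are
disjoint, `φ` is a finite combination of products of indicators of intervals in `s`, hence bounded
and continuous off finitely many points; as the mesh tends to `0` the step functions therefore
converge almost everywhere to `1_{(0,t]}(s) s^{-1/2} φ(s)`. Condition (M) gives
`t_i^{-1/2} ≤ M^{1/2} s^{-1/2}` on each cell, an integrable domination, so by dominated
convergence the Riemann sums converge to the right-hand side, and in particular their `liminf` is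
bounded by it.
-/

open MeasureTheory Filter Topology

/-- An elementary function:
`f_Δ(x,s) = ∑_{k,l} f_{kl} 1_{(x_k, x_{k+1}]}(x) 1_{(s_l, s_{l+1}]}(s)` where
`x_1 < ⋯ < x_{m₁+1}` are reals and `0 ≤ s_1 < ⋯ < s_{m₂+1} ≤ 1`. -/
def IsElementary (g : ℝ × ℝ → ℝ) : Prop :=
  ∃ (m₁ m₂ : ℕ) (xs : Fin (m₁ + 1) → ℝ) (ss : Fin (m₂ + 1) → ℝ) (c : Fin m₁ → Fin m₂ → ℝ),
    StrictMono xs ∧ StrictMono ss ∧ 0 ≤ ss 0 ∧ ss (Fin.last m₂) ≤ 1 ∧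
    ∀ p : ℝ × ℝ, g p = ∑ k : Fin m₁, ∑ l : Fin m₂,
      c k l * (Set.Ioc (xs k.castSucc) (xs k.succ)).indicator 1 p.1 *
        (Set.Ioc (ss l.castSucc) (ss l.succ)).indicator 1 p.2

open Set

section DisjointIndicators

variable {ι α M : Type*} {s : Finset ι} {I : ι → Set α}

lemma Finset.sum_indicator_apply_of_mem [AddCommMonoid M] (hI : (s : Set ι).PairwiseDisjoint I)
    (c : ι → α → M) {k : ι} (hk : k ∈ s) {x : α} (hx : x ∈ I k) :
    ∑ j ∈ s, (I j).indicator (c j) x = c k x := by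
  rw [Finset.sum_eq_single_of_mem k hk fun j hj hjk =>
    indicator_of_notMem (fun hxj => Set.disjoint_left.mp (hI hj hk hjk) hxj hx) _]
  exact indicator_of_mem hx _

lemma sq_sum_indicator_const (hI : (s : Set ι).PairwiseDisjoint I) (a : ι → ℝ) (x : α) :
    (∑ k ∈ s, (I k).indicator (fun _ => a k) x) ^ 2 =
      ∑ k ∈ s, (I k).indicator (fun _ => a k ^ 2) x := by
  by_cases hx : ∃ k ∈ s, x ∈ I k
  · obtain ⟨k, hk, hxk⟩ := hx
    rw [Finset.sum_indicator_apply_of_mem hI _ hk hxk,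
      Finset.sum_indicator_apply_of_mem hI _ hk hxk]
  · push Not at hx
    have h0 : ∀ b : ι → ℝ, ∑ k ∈ s, (I k).indicator (fun _ => b k) x = 0 := fun b =>
      Finset.sum_eq_zero fun k hk => indicator_of_notMem (hx k hk) _
    simp [h0]

lemma integral_sq_sum_indicator_const [MeasurableSpace α] {μ : Measure α}
    (hI : (s : Set ι).PairwiseDisjoint I) (hmeas : ∀ k, MeasurableSet (I k))
    (hfin : ∀ k, μ (I k) ≠ ⊤) (a : ι → ℝ) :
    ∫ x, (∑ k ∈ s, (I k).indicator (fun _ => a k) x) ^ 2 ∂μ =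
      ∑ k ∈ s, μ.real (I k) * a k ^ 2 := by
  simp_rw [sq_sum_indicator_const hI]
  rw [integral_finsetSum _ fun k _ => (integrableOn_const (hfin k)).integrable_indicator (hmeas k)]
  simp_rw [integral_indicator_const _ (hmeas _), smul_eq_mul]

end DisjointIndicators

structure BddAEContinuous (h : ℝ → ℝ) : Prop where
  bdd : ∃ B, ∀ s, |h s| ≤ B
  ae_continuousAt : ∀ᵐ s, ContinuousAt h s

namespace BddAEContinuous

variable {f g : ℝ → ℝ}

lemma const (c : ℝ) : BddAEContinuous fun _ => c :=
  ⟨⟨|c|, fun _ => le_rfl⟩, ae_of_all _ fun _ => continuousAt_const⟩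

lemma add (hf : BddAEContinuous f) (hg : BddAEContinuous g) :
    BddAEContinuous fun s => f s + g s := by
  obtain ⟨⟨B, hB⟩, hfc⟩ := hf
  obtain ⟨⟨C, hC⟩, hgc⟩ := hg
  refine ⟨⟨B + C, fun s => (abs_add_le _ _).trans (add_le_add (hB s) (hC s))⟩, ?_⟩
  filter_upwards [hfc, hgc] with s hfs hgs
  exact hfs.add hgs

lemma mul (hf : BddAEContinuous f) (hg : BddAEContinuous g) :
    BddAEContinuous fun s => f s * g s := by
  obtain ⟨⟨B, hB⟩, hfc⟩ := hf
  obtain ⟨⟨C, hC⟩, hgc⟩ := hg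
  refine ⟨⟨B * C, fun s => ?_⟩, ?_⟩
  · rw [abs_mul]
    exact mul_le_mul (hB s) (hC s) (abs_nonneg _) ((abs_nonneg _).trans (hB s))
  · filter_upwards [hfc, hgc] with s hfs hgs
    exact hfs.mul hgs

lemma pow (hf : BddAEContinuous f) (n : ℕ) : BddAEContinuous fun s => f s ^ n := by
  induction n with
  | zero => simpa using const 1
  | succ n ih => simpa only [pow_succ] using ih.mul hf

lemma finset_sum {ι : Type*} (s : Finset ι) {f : ι → ℝ → ℝ}
    (hf : ∀ i ∈ s, BddAEContinuous (f i)) :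
    BddAEContinuous fun x => ∑ i ∈ s, f i x := by
  induction s using Finset.cons_induction with
  | empty => simpa using const 0
  | cons i s hi ih =>
    simp only [Finset.sum_cons]
    exact (hf i (Finset.mem_cons_self i s)).add (ih fun j hj => hf j (Finset.mem_cons_of_mem hj))

lemma indicator_Ioc (a b : ℝ) : BddAEContinuous ((Ioc a b).indicator 1) := by
  refine ⟨⟨1, fun s => ?_⟩, ?_⟩
  · by_cases hs : s ∈ Ioc a b <;> simp [hs]
  · filter_upwards [Measure.ae_ne volume a, Measure.ae_ne volume b] with s ha hb
    refine continuousOn_const.continuousAt_indicator fun hs => hs.2 ?_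
    obtain ⟨h₁, h₂⟩ := closure_minimal Set.Ioc_subset_Icc_self isClosed_Icc hs.1
    rw [interior_Ioc]
    exact ⟨lt_of_le_of_ne h₁ ha.symm, lt_of_le_of_ne h₂ hb⟩

end BddAEContinuous

lemma IsElementary.bddAEContinuous_integral_sq {f : ℝ × ℝ → ℝ} (hf : IsElementary f) :
    BddAEContinuous fun s => ∫ x, f (x, s) ^ 2 := by
  obtain ⟨m₁, m₂, xs, ss, c, hxs, -, -, -, hrep⟩ := hf
  set I : Fin m₁ → Set ℝ := fun k => Ioc (xs k.castSucc) (xs k.succ)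
  set a : Fin m₁ → ℝ → ℝ := fun k s =>
    ∑ l, c k l * (Ioc (ss l.castSucc) (ss l.succ)).indicator 1 s
  have hdisj : ((Finset.univ : Finset (Fin m₁)) : Set (Fin m₁)).PairwiseDisjoint I :=
    ((pairwise_disjoint_on I).2 fun _ _ hkk' => Ioc_disjoint_Ioc_of_le
      (hxs.monotone (Fin.castSucc_lt_iff_succ_le.mp hkk'))).set_pairwise _
  have hsection : ∀ s,
      (fun x => f (x, s)) = fun x => ∑ k, (I k).indicator (fun _ => a k s) x := by
    intro s
    funext x
    rw [hrep]
    refine Finset.sum_congr rfl fun k _ => ?_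
    by_cases hx : x ∈ I k <;> simp [I, a, hx]
  have hformula :
      (fun s => ∫ x, f (x, s) ^ 2) = fun s => ∑ k, volume.real (I k) * a k s ^ 2 := by
    funext s
    rw [← integral_sq_sum_indicator_const hdisj (fun _ => measurableSet_Ioc)
      (fun _ => measure_Ioc_lt_top.ne)]
    exact congrArg (fun g : ℝ → ℝ => ∫ x, g x ^ 2) (hsection s)
  have ha : ∀ k, BddAEContinuous (a k) := fun _ => BddAEContinuous.finset_sum _ fun _ _ =>
    (BddAEContinuous.const _).mul (BddAEContinuous.indicator_Ioc _ _)
  rw [hformula]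
  exact BddAEContinuous.finset_sum _ fun k _ => (BddAEContinuous.const _).mul ((ha k).pow 2)

noncomputable def partitionStep (τ : ℕ → ℝ) (N : ℕ) (c : ℕ → ℝ) (s : ℝ) : ℝ :=
  ∑ i ∈ Finset.range N, (Ioc (τ i) (τ (i + 1))).indicator (fun _ => c i) s

section PartitionStep

variable {τ : ℕ → ℝ} {N : ℕ} {c : ℕ → ℝ} {s : ℝ}

lemma exists_mem_Ioc_of_lt_of_le {α : Type*} [LinearOrder α] (f : ℕ → α) {x : α} {m : ℕ}
    (h₀ : f 0 < x) (hm : x ≤ f m) : ∃ i < m, x ∈ Ioc (f i) (f (i + 1)) := by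
  induction m with
  | zero => exact absurd (h₀.trans_le hm) (lt_irrefl _)
  | succ m ih =>
    by_cases hxm : x ≤ f m
    · obtain ⟨i, hi, hx⟩ := ih hxm
      exact ⟨i, hi.trans (Nat.lt_succ_self m), hx⟩
    · exact ⟨m, Nat.lt_succ_self m, lt_of_not_ge hxm, hm⟩

lemma MonotoneOn.pairwiseDisjoint_Ioc_succ (hτ : MonotoneOn τ (Iic N)) :
    ((Finset.range N : Finset ℕ) : Set ℕ).PairwiseDisjoint fun i => Ioc (τ i) (τ (i + 1)) := by
  have key : ∀ i j, i < j → j < N → Disjoint (Ioc (τ i) (τ (i + 1))) (Ioc (τ j) (τ (j + 1))) :=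
    fun i j hij hj => Ioc_disjoint_Ioc_of_le <|
      hτ (mem_Iic.2 (by omega)) (mem_Iic.2 hj.le) (Nat.succ_le_of_lt hij)
  intro i hi j hj hij
  simp only [Finset.coe_range, mem_Iio] at hi hj
  rcases lt_or_gt_of_ne hij with h | h
  · exact key i j h hj
  · exact (key j i h hi).symm

lemma partitionStep_apply_of_mem (hτ : MonotoneOn τ (Iic N)) {i : ℕ} (hi : i < N)
    (hs : s ∈ Ioc (τ i) (τ (i + 1))) : partitionStep τ N c s = c i :=
  Finset.sum_indicator_apply_of_mem hτ.pairwiseDisjoint_Ioc_succ _ (Finset.mem_range.2 hi) hs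

lemma partitionStep_eq_zero (h : ∀ i < N, s ∈ Ioc (τ i) (τ (i + 1)) → c i = 0) :
    partitionStep τ N c s = 0 :=
  Finset.sum_eq_zero fun i hi => indicator_apply_eq_zero.2 (h i (Finset.mem_range.1 hi))

lemma integrable_partitionStep : Integrable (partitionStep τ N c) :=
  integrable_finsetSum _ fun _ _ =>
    (integrableOn_const measure_Ioc_lt_top.ne).integrable_indicator measurableSet_Ioc

lemma integral_partitionStep (hτ : ∀ i < N, τ i ≤ τ (i + 1)) :
    ∫ s, partitionStep τ N c s = ∑ i ∈ Finset.range N, (τ (i + 1) - τ i) * c i := by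
  unfold partitionStep
  rw [integral_finsetSum _ fun _ _ =>
    (integrableOn_const measure_Ioc_lt_top.ne).integrable_indicator measurableSet_Ioc]
  refine Finset.sum_congr rfl fun i hi => ?_
  rw [integral_indicator_const _ measurableSet_Ioc,
    Real.volume_real_Ioc_of_le (hτ i (Finset.mem_range.1 hi)), smul_eq_mul]

end PartitionStep

lemma rpow_le_rpow_mul_of_le_mul {τ s M r : ℝ} (hτ : 0 < τ) (hτs : τ ≤ s) (hsM : s ≤ M * τ)
    (hr : r ≤ 0) : τ ^ r ≤ M ^ (-r) * s ^ r := by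
  have hs : 0 < s := hτ.trans_le hτs
  have hM : 0 < M := pos_of_mul_pos_left (hs.trans_le hsM) hτ.le
  calc τ ^ r ≤ (s / M) ^ r :=
        Real.rpow_le_rpow_of_nonpos (div_pos hs hM) ((div_le_iff₀ hM).2 (by linarith)) hr
    _ = M ^ (-r) * s ^ r := by rw [Real.div_rpow hs.le hM.le, Real.rpow_neg hM.le, div_eq_inv_mul]

structure FinePartitions (N : ℕ → ℕ) (τ : ℕ → ℕ → ℝ) : Prop where
  pos : ∀ n, 0 < τ n 0
  lt_succ : ∀ n, ∀ i < N n, τ n i < τ n (i + 1)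
  last : ∀ n, τ n (N n) = 1
  mesh : ∀ ε > (0 : ℝ), ∃ n₀ : ℕ, ∀ n ≥ n₀, τ n 0 < ε ∧ ∀ i < N n, τ n (i + 1) - τ n i < ε

namespace FinePartitions

variable {N : ℕ → ℕ} {τ : ℕ → ℕ → ℝ}

lemma monotoneOn (hD : FinePartitions N τ) (n : ℕ) : MonotoneOn (τ n) (Iic (N n)) :=
  (strictMonoOn_Iic_of_lt_succ fun i hi => by
    simpa [Order.succ_eq_add_one] using hD.lt_succ n i hi).monotoneOn

lemma pos_of_le (hD : FinePartitions N τ) {n i : ℕ} (hi : i ≤ N n) : 0 < τ n i :=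
  (hD.pos n).trans_le (hD.monotoneOn n (mem_Iic.2 (Nat.zero_le _)) (mem_Iic.2 hi) (Nat.zero_le _))

lemma mem_Ioc_zero_one_of_mem (hD : FinePartitions N τ) {n i : ℕ} (hi : i < N n) {s : ℝ}
    (hs : s ∈ Ioc (τ n i) (τ n (i + 1))) : s ∈ Ioc 0 1 :=
  ⟨(hD.pos_of_le hi.le).trans hs.1,
    hs.2.trans ((hD.monotoneOn n (mem_Iic.2 hi) (mem_Iic.2 le_rfl) hi).trans_eq (hD.last n))⟩

lemma pos_of_le_mul (hD : FinePartitions N τ) {M : ℝ}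
    (hM : ∀ n, ∀ i < N n, τ n (i + 1) ≤ M * τ n i) : 0 < M := by
  obtain ⟨n₀, hn₀⟩ := hD.mesh 1 one_pos
  have hN : 0 < N n₀ := Nat.pos_of_ne_zero fun h => by
    have := hD.last n₀
    rw [h] at this
    linarith [(hn₀ n₀ le_rfl).1]
  exact pos_of_mul_pos_left ((hD.pos_of_le hN).trans_le (hM n₀ 0 hN)) (hD.pos n₀).le

lemma partitionStep_eq_zero_of_nonpos (hD : FinePartitions N τ) {n : ℕ} {c : ℕ → ℝ} {s : ℝ}
    (hs : s ≤ 0) : partitionStep (τ n) (N n) c s = 0 :=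
  partitionStep_eq_zero fun _ hi hsi => absurd (hD.mem_Ioc_zero_one_of_mem hi hsi).1 hs.not_gt

lemma eventually_partitionStep_eq_zero (hD : FinePartitions N τ) {k : ℝ → ℝ} {t s : ℝ}
    (hts : t < s) : ∀ᶠ n in atTop,
      partitionStep (τ n) (N n) (fun i => if τ n i ≤ t then k (τ n i) else 0) s = 0 := by
  obtain ⟨n₀, hn₀⟩ := hD.mesh (s - t) (sub_pos.2 hts)
  filter_upwards [eventually_ge_atTop n₀] with n hn
  refine partitionStep_eq_zero fun i hi hsi => if_neg (not_le.2 ?_)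
  linarith [(hn₀ n hn).2 i hi, hsi.2]

lemma tendsto_partitionStep_of_lt (hD : FinePartitions N τ) {k : ℝ → ℝ} {t s : ℝ}
    (hk : ContinuousAt k s) (hs : 0 < s) (hst : s < t) (ht : t ≤ 1) :
    Tendsto (fun n => partitionStep (τ n) (N n) (fun i => if τ n i ≤ t then k (τ n i) else 0) s)
      atTop (𝓝 (k s)) := by
  rw [Metric.tendsto_atTop]
  intro ε hε
  obtain ⟨δ, hδ, hkδ⟩ := Metric.continuousAt_iff.mp hk ε hε
  obtain ⟨n₀, hn₀⟩ := hD.mesh (min δ (min s (t - s))) (by positivity)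
  refine ⟨n₀, fun n hn => ?_⟩
  obtain ⟨h₀, hgap⟩ := hn₀ n hn
  simp only [lt_min_iff] at h₀ hgap
  obtain ⟨i, hi, hsi⟩ := exists_mem_Ioc_of_lt_of_le (τ n) h₀.2.1
    (hst.le.trans (ht.trans_eq (hD.last n).symm))
  obtain ⟨hgapδ, -, hgapt⟩ := hgap i hi
  rw [partitionStep_apply_of_mem (hD.monotoneOn n) hi hsi, if_pos (by linarith [hsi.1])]
  refine hkδ ?_
  rw [Real.dist_eq, abs_of_neg (by linarith [hsi.1])]
  linarith [hsi.2]

lemma tendsto_partitionStep (hD : FinePartitions N τ) {k : ℝ → ℝ} {t s : ℝ} (ht : t ≤ 1)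
    (hk : ContinuousAt k s) (hst : s ≠ t) :
    Tendsto (fun n => partitionStep (τ n) (N n) (fun i => if τ n i ≤ t then k (τ n i) else 0) s)
      atTop (𝓝 ((Ioc 0 t).indicator k s)) := by
  rcases le_or_gt s 0 with hs | hs
  · rw [indicator_of_notMem fun h => h.1.not_ge hs]
    simp_rw [hD.partitionStep_eq_zero_of_nonpos hs]
    exact tendsto_const_nhds
  rcases lt_or_gt_of_ne hst with hst | hts
  · rw [indicator_of_mem (show s ∈ Ioc 0 t from ⟨hs, hst.le⟩)]
    exact hD.tendsto_partitionStep_of_lt hk hs hst ht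
  · rw [indicator_of_notMem fun h => h.2.not_gt hts]
    exact tendsto_const_nhds.congr'
      ((hD.eventually_partitionStep_eq_zero hts).mono fun _ h => h.symm)

lemma abs_partitionStep_le (hD : FinePartitions N τ) {M : ℝ}
    (hM : ∀ n, ∀ i < N n, τ n (i + 1) ≤ M * τ n i) {h : ℝ → ℝ} {B : ℝ} (hB : ∀ u, |h u| ≤ B)
    {r : ℝ} (hr : r ≤ 0) (t s : ℝ) (n : ℕ) :
    |partitionStep (τ n) (N n) (fun i => if τ n i ≤ t then τ n i ^ r * h (τ n i) else 0) s| ≤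
      (Ioc 0 1).indicator (fun u => M ^ (-r) * u ^ r * B) s := by
  have hweight : ∀ u ∈ Ioc (0 : ℝ) 1, 0 ≤ M ^ (-r) * u ^ r := fun u hu =>
    mul_nonneg (Real.rpow_nonneg (hD.pos_of_le_mul hM).le _) (Real.rpow_nonneg hu.1.le _)
  have hbound : ∀ u ∈ Ioc (0 : ℝ) 1, 0 ≤ M ^ (-r) * u ^ r * B := fun u hu =>
    mul_nonneg (hweight u hu) ((abs_nonneg _).trans (hB 0))
  by_cases hcell : ∃ i < N n, s ∈ Ioc (τ n i) (τ n (i + 1))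
  · obtain ⟨i, hi, hsi⟩ := hcell
    have hs := hD.mem_Ioc_zero_one_of_mem hi hsi
    have hτ := hD.pos_of_le hi.le
    rw [partitionStep_apply_of_mem (hD.monotoneOn n) hi hsi, indicator_of_mem hs]
    split_ifs
    · rw [abs_mul, abs_of_nonneg (Real.rpow_nonneg hτ.le _)]
      exact mul_le_mul (rpow_le_rpow_mul_of_le_mul hτ hsi.1.le (hsi.2.trans (hM n i hi)) hr)
        (hB _) (abs_nonneg _) (hweight s hs)
    · simpa using hbound s hs
  · push Not at hcell
    rw [partitionStep_eq_zero fun i hi hsi => absurd hsi (hcell i hi), abs_zero]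
    exact indicator_nonneg hbound s

theorem tendsto_sum_rpow_mul (hD : FinePartitions N τ) {M : ℝ}
    (hM : ∀ n, ∀ i < N n, τ n (i + 1) ≤ M * τ n i) {h : ℝ → ℝ} (hh : BddAEContinuous h)
    {r : ℝ} (hr : -1 < r) (hr0 : r ≤ 0) {t : ℝ} (ht : t ≤ 1) :
    Tendsto (fun n => ∑ i ∈ Finset.range (N n),
        if τ n i ≤ t then (τ n (i + 1) - τ n i) * τ n i ^ r * h (τ n i) else 0)
      atTop (𝓝 (∫ s in Ioc 0 t, h s * s ^ r)) := by
  obtain ⟨⟨B, hB⟩, hcont⟩ := hh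
  have hsum : ∀ n, (∑ i ∈ Finset.range (N n),
      if τ n i ≤ t then (τ n (i + 1) - τ n i) * τ n i ^ r * h (τ n i) else 0) =
      ∫ s, partitionStep (τ n) (N n)
        (fun i => if τ n i ≤ t then τ n i ^ r * h (τ n i) else 0) s := by
    intro n
    rw [integral_partitionStep fun i hi => (hD.lt_succ n i hi).le]
    refine Finset.sum_congr rfl fun i _ => ?_
    split_ifs <;> ring
  have hlimit :
      ∫ s in Ioc 0 t, h s * s ^ r = ∫ s, (Ioc 0 t).indicator (fun u => u ^ r * h u) s := by
    rw [integral_indicator measurableSet_Ioc]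
    simp_rw [mul_comm]
  have hbound : Integrable ((Ioc 0 1).indicator fun u => M ^ (-r) * u ^ r * B) := by
    rw [integrable_indicator_iff measurableSet_Ioc]
    exact (((intervalIntegrable_iff_integrableOn_Ioc_of_le zero_le_one).1
      (intervalIntegral.intervalIntegrable_rpow' hr)).const_mul _).mul_const _
  simp_rw [hsum, hlimit]
  refine tendsto_integral_of_dominated_convergence _
    (fun n => integrable_partitionStep.aestronglyMeasurable) hbound
    (fun n => ae_of_all _ fun s => hD.abs_partitionStep_le hM hB hr0 t s n) ?_
  filter_upwards [hcont, Measure.ae_ne volume 0, Measure.ae_ne volume t] with s hs hs0 hst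
  exact hD.tendsto_partitionStep ht ((Real.continuousAt_rpow_const s r (Or.inl hs0)).mul hs) hst

end FinePartitions

/-- Let `(D_n)` be a sequence of partitions `0 < t_1^n < ⋯ < t_{N_n}^n = 1` of `(0,1]`
satisfying condition (M), let `f_Δ` be an elementary function and `t ∈ (0,1]`.  Then
`liminf_n ∑_{t_i ∈ D_n, t_i ≤ t} (t_{i+1} - t_i) t_i^(-1/2) ∫_ℝ f_Δ(x,t_i)² dx
  ≤ ∫₀^t ∫_ℝ f_Δ(x,s)² s^(-1/2) dx ds`.
Here `τ n i` is the `(i+1)`-st point of `D_n` (so `τ n 0 = t_1^n` and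
`τ n (N n) = 1`). -/
theorem stmt_5 (N : ℕ → ℕ) (τ : ℕ → ℕ → ℝ)
    (hpos : ∀ n, 0 < τ n 0)
    (hmono : ∀ n, ∀ i < N n, τ n i < τ n (i + 1))
    (hone : ∀ n, τ n (N n) = 1)
    (hmesh : ∀ ε > (0 : ℝ), ∃ n₀ : ℕ, ∀ n ≥ n₀,
      τ n 0 < ε ∧ ∀ i < N n, τ n (i + 1) - τ n i < ε)
    (M : ℝ) (hM : ∀ n, ∀ i < N n, τ n (i + 1) ≤ M * τ n i)
    (fΔ : ℝ × ℝ → ℝ) (hfΔ : IsElementary fΔ)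
    (t : ℝ) (ht : t ∈ Set.Ioc (0 : ℝ) 1) :
    Filter.liminf
      (fun n : ℕ => ∑ i ∈ Finset.range (N n),
        if τ n i ≤ t then
          (τ n (i + 1) - τ n i) * (τ n i) ^ (-(1 : ℝ) / 2) * ∫ x : ℝ, (fΔ (x, τ n i)) ^ 2
        else 0)
      atTop
      ≤ ∫ s in Set.Ioc (0 : ℝ) t, ∫ x : ℝ, (fΔ (x, s)) ^ 2 * s ^ (-(1 : ℝ) / 2) := by
  have hD : FinePartitions N τ := ⟨hpos, hmono, hone, hmesh⟩
  have hlim := hD.tendsto_sum_rpow_mul hM hfΔ.bddAEContinuous_integral_sq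
    (r := -(1 : ℝ) / 2) (by norm_num) (by norm_num) ht.2
  simp_rw [integral_mul_const]
  exact hlim.liminf_eq.le
end

section
/- Let 0 < t_1 < t_2 < ⋯ < t_N ≤ 1 be a partition with mesh δ := max_{1 ≤ k ≤ N−1} (t_{k+1} − t_k). Then for every index j with 1 ≤ j ≤ N−1, ∑_{i : t_{i+1} ≤ t_j} (t_{i+1} − t_i) t_{i+1}^{-3/4} ∫_{t_j}^{t_{j+1}} (s − t_{i+1})^{-3/4} ds ≤ 16 δ^{1/4}. Consequently, for a sequence of partitions whose mesh tends to 0, this quantity tends to 0. -/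
/-!
Writing `p = 1/4`, both factors are controlled by quarter powers. Substituting `u = s - t_{i+1}`,
the inner integral equals `4 ((t_{j+1} - t_{i+1})^p - (t_j - t_{i+1})^p)`, which the
subadditivity of `x ↦ x^p` bounds by `4 (t_{j+1} - t_j)^p ≤ 4 δ^p`, uniformly in `i`. The weights
satisfy `(t_{i+1} - t_i) t_{i+1}^{p-1} ≤ 4 (t_{i+1}^p - t_i^p)` (tangent line of the concave
`x ↦ x^p` at `t_{i+1}`, i.e. Bernoulli's inequality), so they telescope to at most `4 t_N^p ≤ 4`.
-/
open MeasureTheory Set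

theorem Fin.sum_univ_succ_sub_castSucc {M : Type*} [AddCommGroup M] {n : ℕ} (f : Fin (n + 1) → M) :
    ∑ i : Fin n, (f i.succ - f i.castSucc) = f (Fin.last n) - f 0 := by
  induction n with
  | zero => simp
  | succ n ih =>
    rw [Fin.sum_univ_castSucc]
    simp only [Fin.succ_castSucc]
    rw [ih (fun k => f k.castSucc), Fin.succ_last, Fin.castSucc_zero]
    abel

namespace Real

lemma sub_mul_rpow_sub_one_le {p a b : ℝ} (hp : 0 < p) (hp1 : p ≤ 1) (ha : 0 ≤ a) (hab : a ≤ b) :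
    (b - a) * b ^ (p - 1) ≤ (b ^ p - a ^ p) / p := by
  rcases (ha.trans hab).eq_or_lt with hb | hb
  · obtain rfl : a = 0 := by linarith
    simp [← hb]
  have hbern := rpow_one_add_le_one_add_mul_self (s := a / b - 1) (by linarith [div_nonneg ha hb.le])
    hp.le hp1
  rw [add_sub_cancel, div_rpow ha hb.le, div_le_iff₀ (rpow_pos_of_pos hb p)] at hbern
  rw [le_div_iff₀ hp, rpow_sub_one hb.ne']
  have hbp := rpow_pos_of_pos hb p
  field_simp at hbern ⊢
  nlinarith

lemma setIntegral_Ioc_sub_rpow_sub_one_le {p a b c : ℝ} (hp : 0 < p) (hp1 : p ≤ 1) (hca : c ≤ a)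
    (hab : a ≤ b) : ∫ s in Ioc a b, (s - c) ^ (p - 1) ≤ (b - a) ^ p / p := by
  have hsub : (b - c) ^ p ≤ (a - c) ^ p + (b - a) ^ p := by
    simpa using rpow_add_le_add_rpow (sub_nonneg.2 hca) (sub_nonneg.2 hab) hp.le hp1
  rw [← intervalIntegral.integral_of_le hab, intervalIntegral.integral_comp_sub_right
    (fun u => u ^ (p - 1)), integral_rpow (Or.inl (by linarith)), sub_add_cancel]
  gcongr
  linarith

end Real

lemma sum_sub_mul_rpow_sub_one_le {n : ℕ} {τ : Fin (n + 1) → ℝ} {p : ℝ} (hp : 0 < p) (hp1 : p ≤ 1)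
    (h0 : 0 ≤ τ 0) (hτ : Monotone τ) :
    ∑ i : Fin n, (τ i.succ - τ i.castSucc) * τ i.succ ^ (p - 1) ≤ τ (Fin.last n) ^ p / p := by
  calc ∑ i : Fin n, (τ i.succ - τ i.castSucc) * τ i.succ ^ (p - 1)
      ≤ ∑ i : Fin n, (τ i.succ ^ p / p - τ i.castSucc ^ p / p) := by
        gcongr with i
        rw [← sub_div]
        exact Real.sub_mul_rpow_sub_one_le hp hp1 (h0.trans (hτ (Fin.zero_le _)))
          (hτ i.castSucc_le_succ)
    _ = τ (Fin.last n) ^ p / p - τ 0 ^ p / p := Fin.sum_univ_succ_sub_castSucc (fun k => τ k ^ p / p)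
    _ ≤ τ (Fin.last n) ^ p / p := by
        have := Real.rpow_nonneg h0 p
        linarith [div_nonneg this hp.le]

/-- Let `0 < t_1 < ⋯ < t_N ≤ 1` be a partition with mesh
`δ = max_{1 ≤ k ≤ N-1} (t_{k+1} - t_k)`.  Then for every `j` with `1 ≤ j ≤ N-1`,
`∑_{i : t_{i+1} ≤ t_j} (t_{i+1} - t_i) t_{i+1}^(-3/4)
    ∫_{t_j}^{t_{j+1}} (s - t_{i+1})^(-3/4) ds ≤ 16 δ^(1/4)`.
Here the partition is encoded as `τ : Fin (n+1) → ℝ` (so `n = N - 1` successor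
intervals, `t_j = τ j.castSucc` and `t_{j+1} = τ j.succ` for `j : Fin n`). -/
theorem stmt_8 (n : ℕ) (τ : Fin (n + 1) → ℝ) (δ : ℝ)
    (hpos : 0 < τ 0) (hmono : StrictMono τ) (hlast : τ (Fin.last n) ≤ 1)
    (hδ : δ = ⨆ k : Fin n, (τ k.succ - τ k.castSucc)) :
    ∀ j : Fin n,
      (∑ i : Fin n,
        if τ i.succ ≤ τ j.castSucc then
          (τ i.succ - τ i.castSucc) * (τ i.succ) ^ (-(3 : ℝ) / 4) *
            ∫ s in Set.Ioc (τ j.castSucc) (τ j.succ), (s - τ i.succ) ^ (-(3 : ℝ) / 4)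
        else 0)
      ≤ 16 * δ ^ ((1 : ℝ) / 4) := by
  intro j
  rw [show -(3 : ℝ) / 4 = 1 / 4 - 1 by norm_num]
  have hτ : ∀ k, 0 ≤ τ k := fun k => hpos.le.trans (hmono.monotone (Fin.zero_le k))
  have hgap : τ j.succ - τ j.castSucc ≤ δ :=
    hδ ▸ le_ciSup (f := fun k : Fin n => τ k.succ - τ k.castSucc) (finite_range _).bddAbove j
  have hj := hmono.monotone j.castSucc_le_succ
  have hδ0 : 0 ≤ δ := (sub_nonneg.2 hj).trans hgap
  have hint : ∀ i : Fin n, τ i.succ ≤ τ j.castSucc →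
      ∫ s in Ioc (τ j.castSucc) (τ j.succ), (s - τ i.succ) ^ ((1 : ℝ) / 4 - 1)
        ≤ 4 * δ ^ ((1 : ℝ) / 4) := fun i hi =>
    calc _ ≤ (τ j.succ - τ j.castSucc) ^ ((1 : ℝ) / 4) / (1 / 4) :=
          Real.setIntegral_Ioc_sub_rpow_sub_one_le (by norm_num) (by norm_num) hi hj
      _ = 4 * (τ j.succ - τ j.castSucc) ^ ((1 : ℝ) / 4) := by ring
      _ ≤ 4 * δ ^ ((1 : ℝ) / 4) := by gcongr
  have hweight : ∀ i : Fin n, 0 ≤ (τ i.succ - τ i.castSucc) * τ i.succ ^ ((1 : ℝ) / 4 - 1) :=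
    fun i => mul_nonneg (sub_nonneg.2 (hmono.monotone i.castSucc_le_succ))
      (Real.rpow_nonneg (hτ _) _)
  have hsum := sum_sub_mul_rpow_sub_one_le (by norm_num : (0 : ℝ) < 1 / 4) (by norm_num)
    hpos.le hmono.monotone
  have hlast' : τ (Fin.last n) ^ ((1 : ℝ) / 4) ≤ 1 :=
    Real.rpow_le_one (hτ _) hlast (by norm_num)
  calc _ ≤ ∑ i : Fin n, (τ i.succ - τ i.castSucc) * τ i.succ ^ ((1 : ℝ) / 4 - 1)
          * (4 * δ ^ ((1 : ℝ) / 4)) := by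
        gcongr with i
        split_ifs with hi
        · exact mul_le_mul_of_nonneg_left (hint i hi) (hweight i)
        · exact mul_nonneg (hweight i) (by positivity)
    _ = (∑ i : Fin n, (τ i.succ - τ i.castSucc) * τ i.succ ^ ((1 : ℝ) / 4 - 1))
          * (4 * δ ^ ((1 : ℝ) / 4)) := (Finset.sum_mul ..).symm
    _ ≤ 4 * (4 * δ ^ ((1 : ℝ) / 4)) := by
        gcongr
        linarith
    _ = 16 * δ ^ ((1 : ℝ) / 4) := by ring
end
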